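/- Let k > 0, ν > 0, and c ∈ ℝ. Then for all x > 0, d/dx ( x^{ν/k} W^k_{ν,c}(x) ) = (x^{ν/k}/k) W^k_{ν−k,c}(x). -/

import Mathlib

/-!
Write `W^k_{ν,c}(x) = (x/2)^{ν/k} F(x²/4)` with the power series `F(z) = ∑ aᵣ zʳ`,
`aᵣ = (-c)ʳ / (Γ_k(rk + ν + k) r!)`. Since `|aᵣ₊₁| ≤ |c| / (k (r + 1)) · |aᵣ|`, `F` converges on
all of `ℝ` and may be differentiated termwise. The recursion `Γ_k(s + k) = s Γ_k(s)` turns the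
coefficients of `W^k_{ν-k,c}` into `(rk + ν) aᵣ`, so
`W^k_{ν-k,c}(x) = (x/2)^{ν/k-1} (νF + kzF')(x²/4)`, which is exactly what the product rule
produces from `x^{ν/k} (x/2)^{ν/k} F(x²/4)`.
-/

open Real

/-- The k-gamma function, `Γ_k(x) = k^(x/k - 1) * Γ(x/k)`. -/
noncomputable def kGamma (k x : ℝ) : ℝ := k ^ (x / k - 1) * Real.Gamma (x / k)

/-- The generalized k-Bessel function `W^k_{ν,c}(x)`. -/
noncomputable def kBesselW (k ν c x : ℝ) : ℝ :=
  ∑' r : ℕ, (-c) ^ r / (kGamma k (r * k + ν + k) * (r.factorial : ℝ)) *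
    (x / 2) ^ (2 * (r : ℝ) + ν / k)

open Filter Topology

section EntirePowerSeries

variable {𝕜 : Type*} [RCLike 𝕜] {a : ℕ → 𝕜}

theorem summable_norm_mul_pow_of_norm_succ_le {ε : ℕ → ℝ} (hε : Tendsto ε atTop (𝓝 0))
    (ha : ∀ n, ‖a (n + 1)‖ ≤ ε n * ‖a n‖) (R : ℝ) : Summable fun n => ‖a n‖ * R ^ n := by
  refine summable_of_ratio_norm_eventually_le (r := 2⁻¹) (by norm_num) ?_
  have hsmall : ∀ᶠ n in atTop, ε n * |R| ≤ 2⁻¹ := by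
    simpa using (hε.mul_const |R|).eventually_le_const (u := 2⁻¹) (by norm_num)
  filter_upwards [hsmall] with n hn
  calc ‖‖a (n + 1)‖ * R ^ (n + 1)‖ = ‖a (n + 1)‖ * |R| * |R| ^ n := by
        simp only [norm_mul, norm_pow, Real.norm_eq_abs, abs_norm, pow_succ]; ring
    _ ≤ ε n * ‖a n‖ * |R| * |R| ^ n := by gcongr; exact ha n
    _ = ε n * |R| * ‖‖a n‖ * R ^ n‖ := by
        simp only [norm_mul, norm_pow, Real.norm_eq_abs, abs_norm]; ring
    _ ≤ 2⁻¹ * ‖‖a n‖ * R ^ n‖ := by gcongr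

theorem tsum_natCast_mul_mul_pow (z : 𝕜) :
    ∑' n, n * a n * z ^ n = z * ∑' n, n * a n * z ^ (n - 1) := by
  rw [← tsum_mul_left]
  congr 1 with (_ | n)
  · simp
  · rw [Nat.add_sub_cancel, pow_succ]; ring

variable (h : ∀ R : ℝ, Summable fun n => ‖a n‖ * R ^ n)
include h

theorem summable_mul_pow_of_forall (z : 𝕜) : Summable fun n => a n * z ^ n :=
  (h ‖z‖).of_norm_bounded fun n => by rw [norm_mul, norm_pow]

theorem summable_natCast_mul_norm_mul_pow_of_forall {R : ℝ} (hR : 0 ≤ R) :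
    Summable fun n => n * ‖a n‖ * R ^ n := by
  refine (h (2 * R)).of_nonneg_of_le (fun n => by positivity) fun n => ?_
  calc n * ‖a n‖ * R ^ n ≤ 2 ^ n * ‖a n‖ * R ^ n := by
        gcongr; exact_mod_cast Nat.lt_two_pow_self.le
    _ = ‖a n‖ * (2 * R) ^ n := by ring

theorem hasDerivAt_tsum_mul_pow (z : 𝕜) :
    HasDerivAt (fun w => ∑' n, a n * w ^ n) (∑' n, n * a n * z ^ (n - 1)) z := by
  set R := ‖z‖ + 1
  have hR : 1 ≤ R := by simp [R]
  refine hasDerivAt_tsum_of_isPreconnected (g' := fun n w => n * a n * w ^ (n - 1))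
    (summable_natCast_mul_norm_mul_pow_of_forall h (zero_le_one.trans hR)) Metric.isOpen_ball
    (convex_ball 0 R).isPreconnected
    (fun n w _ => ((hasDerivAt_pow n w).const_mul (a n)).congr_deriv (by ring))
    (fun n w hw => ?_) (Metric.mem_ball_self (by linarith)) (summable_mul_pow_of_forall h 0)
    (mem_ball_zero_iff.2 (by simp [R]))
  rw [mem_ball_zero_iff] at hw
  calc ‖(n : 𝕜) * a n * w ^ (n - 1)‖ = n * ‖a n‖ * ‖w‖ ^ (n - 1) := by simp
    _ ≤ n * ‖a n‖ * R ^ (n - 1) := by gcongr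
    _ ≤ n * ‖a n‖ * R ^ n := by gcongr; exact Nat.sub_le n 1

end EntirePowerSeries

section kBessel

variable {k ν c : ℝ}

theorem kGamma_add {x : ℝ} (hk : 0 < k) (hx : x ≠ 0) : kGamma k (x + k) = x * kGamma k x := by
  have hxk : x / k ≠ 0 := div_ne_zero hx hk.ne'
  rw [kGamma, kGamma, add_div, div_self hk.ne', Real.Gamma_add_one hxk, add_sub_cancel_right,
    Real.rpow_sub_one hk.ne']
  field_simp

theorem kGamma_pos {x : ℝ} (hk : 0 < k) (hx : 0 < x) : 0 < kGamma k x :=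
  mul_pos (Real.rpow_pos_of_pos hk _) (Real.Gamma_pos_of_pos (div_pos hx hk))

variable (k ν c) in
noncomputable def kBesselCoeff (r : ℕ) : ℝ := (-c) ^ r / (kGamma k (r * k + ν + k) * r.factorial)

variable (k ν c) in
noncomputable def kBesselSeries (z : ℝ) : ℝ := ∑' r, kBesselCoeff k ν c r * z ^ r

theorem kBesselW_eq {x : ℝ} (hx : 0 < x) :
    kBesselW k ν c x = (x / 2) ^ (ν / k) * kBesselSeries k ν c ((x / 2) ^ 2) := by
  rw [kBesselW, kBesselSeries, ← tsum_mul_left]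
  congr 1 with r
  rw [Real.rpow_add (by positivity), Real.rpow_mul (by positivity), Real.rpow_two,
    Real.rpow_natCast, kBesselCoeff]
  ring

theorem kBesselCoeff_succ (hk : 0 < k) (hν : 0 ≤ ν) (r : ℕ) :
    kBesselCoeff k ν c (r + 1) = -c / ((r * k + ν + k) * (r + 1)) * kBesselCoeff k ν c r := by
  have hpos : 0 < r * k + ν + k := by positivity
  rw [kBesselCoeff, kBesselCoeff, Nat.factorial_succ, pow_succ]
  push_cast
  rw [show ((r : ℝ) + 1) * k + ν + k = r * k + ν + k + k by ring, kGamma_add hk hpos.ne']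
  have := kGamma_pos hk hpos
  field_simp

theorem kBesselCoeff_sub (hk : 0 < k) (hν : 0 < ν) (r : ℕ) :
    kBesselCoeff k (ν - k) c r = (r * k + ν) * kBesselCoeff k ν c r := by
  have hpos : 0 < r * k + ν := by positivity
  rw [kBesselCoeff, kBesselCoeff, show (r : ℝ) * k + (ν - k) + k = r * k + ν by ring,
    kGamma_add hk hpos.ne']
  have := kGamma_pos hk hpos
  field_simp

theorem summable_norm_kBesselCoeff_mul_pow (hk : 0 < k) (hν : 0 ≤ ν) (R : ℝ) :
    Summable fun r => ‖kBesselCoeff k ν c r‖ * R ^ r := by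
  refine summable_norm_mul_pow_of_norm_succ_le (ε := fun r => |c| / k * (1 / (r + 1)))
    (by simpa using tendsto_one_div_add_atTop_nhds_zero_nat.const_mul (|c| / k)) (fun r => ?_) R
  rw [kBesselCoeff_succ hk hν, norm_mul, norm_div, norm_neg, Real.norm_eq_abs c,
    Real.norm_of_nonneg (by positivity : (0 : ℝ) ≤ (r * k + ν + k) * (r + 1))]
  gcongr
  rw [div_mul_div_comm, mul_one]
  gcongr
  exact le_add_of_nonneg_left (by positivity)

theorem hasDerivAt_kBesselSeries (hk : 0 < k) (hν : 0 ≤ ν) (z : ℝ) :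
    HasDerivAt (kBesselSeries k ν c) (∑' r, r * kBesselCoeff k ν c r * z ^ (r - 1)) z :=
  hasDerivAt_tsum_mul_pow (summable_norm_kBesselCoeff_mul_pow hk hν) z

theorem kBesselSeries_sub (hk : 0 < k) (hν : 0 < ν) (z : ℝ) :
    kBesselSeries k (ν - k) c z =
      ν * kBesselSeries k ν c z + k * z * deriv (kBesselSeries k ν c) z := by
  have hsum := summable_norm_kBesselCoeff_mul_pow (c := c) hk hν.le
  have hsum' : Summable fun r => r * kBesselCoeff k ν c r * z ^ r :=
    (summable_natCast_mul_norm_mul_pow_of_forall hsum (abs_nonneg z)).of_norm_bounded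
      fun r => by simp
  rw [(hasDerivAt_kBesselSeries hk hν.le z).deriv, mul_assoc, ← tsum_natCast_mul_mul_pow,
    kBesselSeries, kBesselSeries, ← tsum_mul_left, ← tsum_mul_left,
    ← ((summable_mul_pow_of_forall hsum z).mul_left ν).tsum_add (hsum'.mul_left k)]
  congr 1 with r
  rw [kBesselCoeff_sub hk hν]
  ring

end kBessel

theorem kBessel_deriv_mul_rpow (k ν c : ℝ) (hk : 0 < k) (hν : 0 < ν) (x : ℝ) (hx : 0 < x) :
    deriv (fun y : ℝ => y ^ (ν / k) * kBesselW k ν c y) x =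
      x ^ (ν / k) / k * kBesselW k (ν - k) c x := by
  set F := kBesselSeries k ν c
  have hF : HasDerivAt F (deriv F ((x / 2) ^ 2)) ((x / 2) ^ 2) :=
    (hasDerivAt_kBesselSeries hk hν.le _).differentiableAt.hasDerivAt
  have hsq := ((hasDerivAt_id' x).div_const 2).fun_pow 2
  have hprod := (Real.hasDerivAt_rpow_const (p := ν / k) (Or.inl hx.ne')).fun_mul
    ((((hasDerivAt_id' x).div_const 2).rpow_const (p := ν / k) (Or.inl (by simp [hx.ne']))).fun_mul
      (hF.comp x hsq))
  have hev : (fun y : ℝ => y ^ (ν / k) * kBesselW k ν c y) =ᶠ[𝓝 x]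
      fun y => y ^ (ν / k) * ((y / 2) ^ (ν / k) * F ((y / 2) ^ 2)) := by
    filter_upwards [Ioi_mem_nhds hx] with y hy
    rw [kBesselW_eq hy]
  rw [hev.deriv_eq]
  refine hprod.deriv.trans ?_
  rw [Function.comp_apply, kBesselW_eq hx, kBesselSeries_sub hk hν,
    Real.rpow_sub_one hx.ne', Real.rpow_sub_one (by positivity : x / 2 ≠ 0),
    show (ν - k) / k = ν / k - 1 by field_simp, Real.rpow_sub_one (by positivity : x / 2 ≠ 0)]
  field_simp
  ring
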